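/- Let b > 0 and m > 0 be real and let l be a nonzero integer. If ψ : (0,∞) → ℂ is twice continuously differentiable on (0,∞), square integrable with respect to Lebesgue measure on (0,∞), and satisfies the deficiency equation −(1/(2m))[ψ''(r) + (1/4 − l²)·ψ(r)/r² − (b²r²/4)·ψ(r)] = i·ψ(r) for all r ∈ (0,∞), then ψ is identically zero. -/

import Mathlib

/-!
Let `q = (l² - 1/4)/r² + b²r²/4` be the effective potential, so that the equation reads
`ψ'' = (q - 2miI) ψ`, and `q ≥ 3/(4r²)` because `l ≠ 0`. The function `u = |ψ|²` satisfies
`u'' = 2|ψ'|² + 2q u ≥ 0` (the imaginary part of the equation drops out), so `u` is convex;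
being integrable on `(0, ∞)` it is nonincreasing. Together with Cauchy–Schwarz
`u'² ≤ 4 u |ψ'|²`, the same identity shows that `v = √u` is a subsolution,
`v'' ≥ 3v/(4r²)`, of the Euler equation whose solutions are `r^{3/2}` and `r^{-1/2}`.
A subsolution with `v r₀ > 0` and `v' r₀ ≤ 0` dominates a multiple of `r^{-1/2}` on `(0, r₀]`, so `u ≥ c/r` there, contradicting integrability at `0`.
-/

open MeasureTheory Set

theorem Convex.monotoneOn_of_hasDerivAt_nonneg {D : Set ℝ} (hD : Convex ℝ D) {f f' : ℝ → ℝ}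
    (hf : ∀ x ∈ D, HasDerivAt f (f' x) x) (hf'₀ : ∀ x ∈ D, 0 ≤ f' x) : MonotoneOn f D :=
  monotoneOn_of_hasDerivWithinAt_nonneg hD
    (fun x hx => (hf x hx).continuousAt.continuousWithinAt)
    (fun x hx => (hf x (interior_subset hx)).hasDerivWithinAt)
    (fun x hx => hf'₀ x (interior_subset hx))

theorem Convex.antitoneOn_of_hasDerivAt_nonpos {D : Set ℝ} (hD : Convex ℝ D) {f f' : ℝ → ℝ}
    (hf : ∀ x ∈ D, HasDerivAt f (f' x) x) (hf'₀ : ∀ x ∈ D, f' x ≤ 0) : AntitoneOn f D :=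
  antitoneOn_of_hasDerivWithinAt_nonpos hD
    (fun x hx => (hf x hx).continuousAt.continuousWithinAt)
    (fun x hx => (hf x (interior_subset hx)).hasDerivWithinAt)
    (fun x hx => hf'₀ x (interior_subset hx))

theorem ContDiffOn.hasDerivAt_deriv_of_isOpen {𝕜 F : Type*} [NontriviallyNormedField 𝕜]
    [NormedAddCommGroup F] [NormedSpace 𝕜 F] {f : 𝕜 → F} {s : Set 𝕜} (hf : ContDiffOn 𝕜 2 f s)
    (hs : IsOpen s) {x : 𝕜} (hx : x ∈ s) : HasDerivAt (deriv f) (deriv (deriv f) x) x :=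
  (((hf.deriv_of_isOpen hs (by norm_num : (1 : WithTop ℕ∞) + 1 ≤ 2)).differentiableOn
    one_ne_zero).differentiableAt (hs.mem_nhds hx)).hasDerivAt

theorem not_integrableOn_Ici_of_one_le {f : ℝ → ℝ} {a : ℝ} (hf : ∀ x ∈ Ici a, 1 ≤ f x) :
    ¬ IntegrableOn f (Ici a) := by
  intro hint
  have hone : IntegrableOn (fun _ => (1 : ℝ)) (Ici a) := by
    refine hint.mono' aestronglyMeasurable_const ?_
    filter_upwards [ae_restrict_mem measurableSet_Ici] with x hx
    simpa using hf x hx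
  simp [integrableOn_const_iff] at hone

theorem deriv_nonpos_of_integrableOn_Ioi {a : ℝ} {u u' : ℝ → ℝ}
    (hu : ∀ t ∈ Ioi a, HasDerivAt u (u' t) t) (hu' : MonotoneOn u' (Ioi a))
    (hint : IntegrableOn u (Ioi a)) {r : ℝ} (hr : a < r) : u' r ≤ 0 := by
  by_contra! hpos
  have htangent : ∀ t ∈ Ici r, u r + u' r * (t - r) ≤ u t := by
    have hmono : MonotoneOn (fun t => u t - u' r * t) (Ici r) :=
      (convex_Ici r).monotoneOn_of_hasDerivAt_nonneg
        (fun t ht => (hu t (hr.trans_le ht)).sub ((hasDerivAt_id t).const_mul (u' r)))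
        (fun t ht => by simpa using hu' hr (hr.trans_le ht) ht)
    intro t ht
    have hrt := hmono (le_refl r) ht ht
    dsimp only at hrt
    linarith
  set T := r + (1 + |u r|) / u' r
  have hrT : r ≤ T := le_add_of_nonneg_right (by positivity)
  refine not_integrableOn_Ici_of_one_le (a := T) (fun t ht => ?_)
    (hint.mono_set fun t ht => hr.trans_le (hrT.trans ht))
  have h1 : 1 + |u r| ≤ u' r * (t - r) := (div_le_iff₀' hpos).1 (by linarith [mem_Ici.1 ht])
  linarith [htangent t (hrT.trans ht), neg_abs_le (u r)]

theorem hasDerivAt_sqrt_mul {v : ℝ → ℝ} {v' t : ℝ} (ht : 0 < t) (hv : HasDerivAt v v' t) :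
    HasDerivAt (fun s => √s * v s) ((v t + 2 * t * v') / (2 * √t)) t := by
  refine ((Real.hasDerivAt_sqrt ht.ne').mul hv).congr_deriv ?_
  field_simp
  rw [Real.sq_sqrt ht.le]
  ring

theorem hasDerivAt_deriv_sqrt_mul_div {v v' : ℝ → ℝ} {v'' t : ℝ} (ht : 0 < t)
    (hv : HasDerivAt v (v' t) t) (hv' : HasDerivAt v' v'' t) :
    HasDerivAt (fun s => (v s + 2 * s * v' s) / (2 * s * √s))
      ((v'' - 3 / (4 * t ^ 2) * v t) / √t) t := by
  have hnum : HasDerivAt (fun s => v s + 2 * s * v' s) (v' t + (2 * 1 * v' t + 2 * t * v'')) t :=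
    hv.add (((hasDerivAt_id' t).const_mul 2).mul hv')
  have hden : HasDerivAt (fun s => 2 * s * √s) (2 * 1 * √t + 2 * t * (1 / (2 * √t))) t :=
    ((hasDerivAt_id' t).const_mul 2).mul (Real.hasDerivAt_sqrt ht.ne')
  have hs : 0 < √t := Real.sqrt_pos.2 ht
  refine (hnum.div hden (by positivity)).congr_deriv ?_
  have hss : √t ^ 2 = t := Real.sq_sqrt ht.le
  generalize √t = s at hs hss ⊢
  subst hss
  field_simp
  ring

/-- With `y = √t v`, the subsolution inequality says that `y'/t` (the function `z` below) is
nondecreasing, and `v' r₀ ≤ 0` bounds it by `y r₀ / (2 r₀²)`; integrating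
`y' ≤ t y r₀ / (2 r₀²)` from `t` to `r₀` loses at most a quarter of `y r₀`. -/
theorem sqrt_mul_ge_of_subsolution {v v' v'' : ℝ → ℝ} {r₀ : ℝ}
    (hv : ∀ t ∈ Ioc 0 r₀, HasDerivAt v (v' t) t) (hv' : ∀ t ∈ Ioc 0 r₀, HasDerivAt v' (v'' t) t)
    (hsub : ∀ t ∈ Ioc 0 r₀, 3 / (4 * t ^ 2) * v t ≤ v'' t) (hpos : 0 ≤ v r₀) (hdec : v' r₀ ≤ 0)
    {t : ℝ} (ht : t ∈ Ioc 0 r₀) : 3 / 4 * (√r₀ * v r₀) ≤ √t * v t := by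
  have hr₀ : 0 < r₀ := ht.1.trans_le ht.2
  have hr₀mem : r₀ ∈ Ioc 0 r₀ := ⟨hr₀, le_rfl⟩
  set z : ℝ → ℝ := fun s => (v s + 2 * s * v' s) / (2 * s * √s)
  set c := √r₀ * v r₀ / (2 * r₀ ^ 2)
  have hz : MonotoneOn z (Ioc 0 r₀) :=
    (convex_Ioc 0 r₀).monotoneOn_of_hasDerivAt_nonneg
      (fun s hs => hasDerivAt_deriv_sqrt_mul_div hs.1 (hv s hs) (hv' s hs))
      (fun s hs => div_nonneg (sub_nonneg.2 (hsub s hs)) (Real.sqrt_nonneg s))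
  have hzr₀ : z r₀ ≤ c := by
    have hs : 0 < √r₀ := Real.sqrt_pos.2 hr₀
    have hss : √r₀ ^ 2 = r₀ := Real.sq_sqrt hr₀.le
    simp only [z, c]
    generalize √r₀ = s at hs hss ⊢
    subst hss
    rw [div_le_div_iff₀ (by positivity) (by positivity)]
    nlinarith [mul_nonpos_of_nonneg_of_nonpos (by positivity : (0 : ℝ) ≤ 4 * s ^ 7) hdec]
  have hanti : AntitoneOn (fun s => √s * v s - c * s ^ 2 / 2) (Ioc 0 r₀) := by
    refine (convex_Ioc 0 r₀).antitoneOn_of_hasDerivAt_nonpos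
      (fun s hs => (hasDerivAt_sqrt_mul hs.1 (hv s hs)).sub
        (((hasDerivAt_pow 2 s).const_mul c).div_const 2)) (fun s hs => ?_)
    have hzs : z s ≤ c := (hz hs hr₀mem hs.2).trans hzr₀
    have hy' : (v s + 2 * s * v' s) / (2 * √s) = s * z s := by
      simp only [z]
      field_simp [hs.1.ne']
    rw [hy']
    nlinarith [hs.1]
  have hyt : √r₀ * v r₀ - c * r₀ ^ 2 / 2 ≤ √t * v t - c * t ^ 2 / 2 := hanti ht hr₀mem ht.2
  have hc : c * r₀ ^ 2 / 2 = √r₀ * v r₀ / 4 := by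
    simp only [c]
    field_simp
    ring
  have : 0 ≤ c * t ^ 2 / 2 := by positivity
  linarith

theorem not_integrableOn_sq_of_subsolution {v v' v'' : ℝ → ℝ} {r₀ : ℝ} (hr₀ : 0 < r₀)
    (hv : ∀ t ∈ Ioc 0 r₀, HasDerivAt v (v' t) t) (hv' : ∀ t ∈ Ioc 0 r₀, HasDerivAt v' (v'' t) t)
    (hsub : ∀ t ∈ Ioc 0 r₀, 3 / (4 * t ^ 2) * v t ≤ v'' t) (hpos : 0 < v r₀) (hdec : v' r₀ ≤ 0) :
    ¬ IntegrableOn (fun t => v t ^ 2) (Ioo 0 r₀) := by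
  intro hint
  set κ := 3 / 4 * (√r₀ * v r₀)
  have hκ : 0 < κ := by positivity
  have hinv : IntegrableOn (fun t => κ ^ 2 * t ^ (-1 : ℝ)) (Ioo 0 r₀) := by
    refine hint.mono' (by fun_prop) ?_
    filter_upwards [ae_restrict_mem measurableSet_Ioo] with t ht
    have hκt := sqrt_mul_ge_of_subsolution hv hv' hsub hpos.le hdec (Ioo_subset_Ioc_self ht)
    rw [Real.rpow_neg_one, ← div_eq_mul_inv,
      Real.norm_of_nonneg (div_nonneg (sq_nonneg κ) ht.1.le), div_le_iff₀ ht.1]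
    calc κ ^ 2 ≤ (√t * v t) ^ 2 := pow_le_pow_left₀ hκ.le hκt 2
      _ = v t ^ 2 * t := by rw [mul_pow, Real.sq_sqrt ht.1.le, mul_comm]
  rw [IntegrableOn, integrable_const_mul_iff (IsUnit.mk0 _ (by positivity)),
    ← IntegrableOn, intervalIntegral.integrableOn_Ioo_rpow_iff hr₀] at hinv
  exact lt_irrefl _ hinv

theorem hasDerivAt_deriv_sqrt {u u' : ℝ → ℝ} {u'' t : ℝ} (hu : HasDerivAt u (u' t) t)
    (hu' : HasDerivAt u' u'' t) (ht : 0 < u t) :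
    HasDerivAt (fun s => u' s / (2 * √(u s)))
      ((2 * u t * u'' - u' t ^ 2) / (4 * u t * √(u t))) t := by
  refine (hu'.div ((hu.sqrt ht.ne').const_mul 2) (by positivity)).congr_deriv ?_
  field_simp
  rw [Real.sq_sqrt ht.le]
  ring

theorem mul_sqrt_le_of_sq_add_le {u u' u'' t : ℝ} (ht : 0 < t) (hu : 0 < u)
    (hsub : u' ^ 2 + 3 * u ^ 2 / t ^ 2 ≤ 2 * u * u'') :
    3 / (4 * t ^ 2) * √u ≤ (2 * u * u'' - u' ^ 2) / (4 * u * √u) := by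
  have : 3 / (4 * t ^ 2) * √u * (4 * u * √u) = 3 * u ^ 2 / t ^ 2 := by
    field_simp
    rw [Real.sq_sqrt hu.le]
  rw [le_div_iff₀ (by positivity), this]
  linarith

theorem eq_zero_of_integrableOn_Ioi_of_sqrt_subsolution {u u' u'' : ℝ → ℝ}
    (hu : ∀ t ∈ Ioi 0, HasDerivAt u (u' t) t) (hu' : ∀ t ∈ Ioi 0, HasDerivAt u' (u'' t) t)
    (hu₀ : ∀ t ∈ Ioi 0, 0 ≤ u t) (hu''₀ : ∀ t ∈ Ioi 0, 0 ≤ u'' t)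
    (hsub : ∀ t ∈ Ioi 0, u' t ^ 2 + 3 * u t ^ 2 / t ^ 2 ≤ 2 * u t * u'' t)
    (hint : IntegrableOn u (Ioi 0)) {r : ℝ} (hr : 0 < r) : u r = 0 := by
  have hu'_nonpos : ∀ t ∈ Ioi 0, u' t ≤ 0 := fun _ ht =>
    deriv_nonpos_of_integrableOn_Ioi hu ((convex_Ioi 0).monotoneOn_of_hasDerivAt_nonneg hu' hu''₀)
      hint ht
  have hanti : AntitoneOn u (Ioi 0) := (convex_Ioi 0).antitoneOn_of_hasDerivAt_nonpos hu hu'_nonpos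
  by_contra hne
  have hpos : ∀ t ∈ Ioc 0 r, 0 < u t := fun t ht =>
    ((hu₀ r hr).lt_of_ne' hne).trans_le (hanti ht.1 hr ht.2)
  refine not_integrableOn_sq_of_subsolution hr (v := fun t => √(u t))
    (fun t ht => (hu t ht.1).sqrt (hpos t ht).ne')
    (fun t ht => hasDerivAt_deriv_sqrt (hu t ht.1) (hu' t ht.1) (hpos t ht))
    (fun t ht => mul_sqrt_le_of_sq_add_le ht.1 (hpos t ht) (hsub t ht.1))
    (Real.sqrt_pos.2 (hpos r ⟨hr, le_rfl⟩))
    (div_nonpos_of_nonpos_of_nonneg (hu'_nonpos r hr) (by positivity)) ?_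
  refine (hint.mono_set Ioo_subset_Ioi_self).congr_fun (fun t ht => ?_) measurableSet_Ioo
  exact (Real.sq_sqrt (hu₀ t ht.1)).symm

theorem Complex.real_inner_self_ofReal_sub_mul_I_mul (z : ℂ) (q c : ℝ) :
    inner ℝ z ((q - c * Complex.I) * z) = q * ‖z‖ ^ 2 := by
  rw [Complex.inner, mul_assoc, Complex.mul_conj, Complex.normSq_eq_norm_sq, Complex.re_mul_ofReal]
  simp

theorem eq_zero_of_memLp_of_deriv_deriv_eq {ψ ψ' ψ'' : ℝ → ℂ} {q : ℝ → ℝ} (c : ℝ)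
    (hψ : ∀ t ∈ Ioi 0, HasDerivAt ψ (ψ' t) t) (hψ' : ∀ t ∈ Ioi 0, HasDerivAt ψ' (ψ'' t) t)
    (hode : ∀ t ∈ Ioi 0, ψ'' t = (q t - c * Complex.I) * ψ t)
    (hq : ∀ t ∈ Ioi 0, 3 / (4 * t ^ 2) ≤ q t)
    (hL2 : MemLp ψ 2 (volume.restrict (Ioi 0))) {r : ℝ} (hr : 0 < r) : ψ r = 0 := by
  have hinner : ∀ t ∈ Ioi 0, inner ℝ (ψ t) (ψ'' t) = q t * ‖ψ t‖ ^ 2 := fun t ht => by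
    rw [hode t ht, Complex.real_inner_self_ofReal_sub_mul_I_mul]
  have hnorm_sq := eq_zero_of_integrableOn_Ioi_of_sqrt_subsolution (u := fun t => ‖ψ t‖ ^ 2)
    (u'' := fun t => 2 * (inner ℝ (ψ t) (ψ'' t) + inner ℝ (ψ' t) (ψ' t)))
    (fun t ht => (hψ t ht).norm_sq) (fun t ht => ((hψ t ht).inner ℝ (hψ' t ht)).const_mul 2)
    (fun _ _ => by positivity) (fun t ht => ?_) (fun t ht => ?_)
    (hL2.integrable_norm_pow two_ne_zero) hr
  · simpa using hnorm_sq
  · have hq₀ : 0 ≤ q t := (hq t ht).trans' (by positivity)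
    rw [hinner t ht, real_inner_self_eq_norm_sq]
    positivity
  · have hcs : inner ℝ (ψ t) (ψ' t) ^ 2 ≤ ‖ψ t‖ ^ 2 * ‖ψ' t‖ ^ 2 := by
      rw [← sq_abs, ← mul_pow]
      exact pow_le_pow_left₀ (abs_nonneg _) (abs_real_inner_le_norm _ _) 2
    have hq' : 3 * (‖ψ t‖ ^ 2) ^ 2 / t ^ 2 ≤ 4 * q t * (‖ψ t‖ ^ 2) ^ 2 := by
      have := mul_le_mul_of_nonneg_right (hq t ht) (by positivity : (0 : ℝ) ≤ 4 * (‖ψ t‖ ^ 2) ^ 2)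
      calc 3 * (‖ψ t‖ ^ 2) ^ 2 / t ^ 2 = 3 / (4 * t ^ 2) * (4 * (‖ψ t‖ ^ 2) ^ 2) := by
            field_simp
        _ ≤ 4 * q t * (‖ψ t‖ ^ 2) ^ 2 := by linarith
    rw [hinner t ht, real_inner_self_eq_norm_sq]
    nlinarith

noncomputable def landauPotential (b : ℝ) (l : ℤ) (r : ℝ) : ℝ :=
  ((l : ℝ) ^ 2 - 1 / 4) / r ^ 2 + b ^ 2 * r ^ 2 / 4

theorem three_div_four_mul_sq_le_landauPotential (b : ℝ) {l : ℤ} (hl : l ≠ 0) {r : ℝ}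
    (hr : 0 < r) : 3 / (4 * r ^ 2) ≤ landauPotential b l r := by
  have hl1 : (1 : ℝ) ≤ (l : ℝ) ^ 2 :=
    mod_cast (one_le_sq_iff_one_le_abs _).2 (Int.one_le_abs hl)
  have : 3 / (4 * r ^ 2) ≤ ((l : ℝ) ^ 2 - 1 / 4) / r ^ 2 := by
    rw [div_le_div_iff₀ (by positivity) (by positivity)]
    nlinarith [sq_nonneg r]
  unfold landauPotential
  linarith [(by positivity : 0 ≤ b ^ 2 * r ^ 2 / 4)]

theorem eq_landauPotential_mul_of_deficiency {b m r : ℝ} {l : ℤ} (hm : m ≠ 0) (hr : r ≠ 0)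
    {d z : ℂ}
    (h : -(1 / (2 * (m : ℂ))) * (d + ((1 : ℂ) / 4 - (l : ℂ) ^ 2) * z / (r : ℂ) ^ 2
      - (b : ℂ) ^ 2 * (r : ℂ) ^ 2 / 4 * z) = Complex.I * z) :
    d = (landauPotential b l r - (2 * m : ℝ) * Complex.I) * z := by
  have hm' : (m : ℂ) ≠ 0 := Complex.ofReal_ne_zero.2 hm
  have hr' : (r : ℂ) ≠ 0 := Complex.ofReal_ne_zero.2 hr
  unfold landauPotential
  push_cast
  field_simp at h ⊢
  linear_combination -h

theorem deficiency_plus_trivial_of_l_ne_zero_general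
    (b m : ℝ) (hm : 0 < m) (l : ℤ) (hl : l ≠ 0)
    (ψ : ℝ → ℂ)
    (hsmooth : ContDiffOn ℝ 2 ψ (Set.Ioi 0))
    (hL2 : MemLp ψ 2 (volume.restrict (Set.Ioi 0)))
    (hode : ∀ r ∈ Set.Ioi (0 : ℝ),
      -(1 / (2 * (m : ℂ))) * (deriv (deriv ψ) r
          + ((1 : ℂ) / 4 - (l : ℂ) ^ 2) * ψ r / (r : ℂ) ^ 2
          - (b : ℂ) ^ 2 * (r : ℂ) ^ 2 / 4 * ψ r)
        = Complex.I * ψ r) :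
    ∀ r ∈ Set.Ioi (0 : ℝ), ψ r = 0 := fun _ hr =>
  eq_zero_of_memLp_of_deriv_deriv_eq (q := landauPotential b l) (2 * m)
    (fun _ ht => ((hsmooth.differentiableOn two_ne_zero).differentiableAt
      (isOpen_Ioi.mem_nhds ht)).hasDerivAt)
    (fun _ ht => hsmooth.hasDerivAt_deriv_of_isOpen isOpen_Ioi ht)
    (fun _ ht => eq_landauPotential_mul_of_deficiency hm.ne' (ne_of_gt ht) (hode _ ht))
    (fun _ ht => three_div_four_mul_sq_le_landauPotential b hl ht) hL2 hr

/-- For `b > 0`, `m > 0` and a nonzero integer `l`, any twice continuously differentiable,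
square-integrable solution `ψ` on `(0,∞)` of the deficiency equation
`−(1/(2m))[ψ'' + (1/4 − l²)ψ/r² − (b²r²/4)ψ] = i ψ` vanishes identically on `(0,∞)`. -/
theorem deficiency_plus_trivial_of_l_ne_zero
    (b m : ℝ) (hb : 0 < b) (hm : 0 < m) (l : ℤ) (hl : l ≠ 0)
    (ψ : ℝ → ℂ)
    (hsmooth : ContDiffOn ℝ 2 ψ (Set.Ioi 0))
    (hL2 : MemLp ψ 2 (volume.restrict (Set.Ioi 0)))
    (hode : ∀ r ∈ Set.Ioi (0 : ℝ),
      -(1 / (2 * (m : ℂ))) * (deriv (deriv ψ) r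
          + ((1 : ℂ) / 4 - (l : ℂ) ^ 2) * ψ r / (r : ℂ) ^ 2
          - (b : ℂ) ^ 2 * (r : ℂ) ^ 2 / 4 * ψ r)
        = Complex.I * ψ r) :
    ∀ r ∈ Set.Ioi (0 : ℝ), ψ r = 0 :=
  deficiency_plus_trivial_of_l_ne_zero_general b m hm l hl ψ hsmooth hL2 hode
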